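/- arXiv:1406.5159 — 4 statements merged into one kernel-verified Lean document; each statement's English description precedes it below -/
import Mathlib

section
/- For linear operators A₁,...,A_{2n} on a finite-dimensional complex vector space V, the Nambu generalized commutator [A₁,...,A_{2n}] = Σ_{σ∈S_{2n}} sign(σ) A_{σ(1)}⋯A_{σ(2n)} equals the sum over all permutations σ ∈ S_{2n} with σ(1)<σ(2), σ(3)<σ(4), ..., σ(2n−1)<σ(2n), of sign(σ)·[A_{σ(1)},A_{σ(2)}][A_{σ(3)},A_{σ(4)}]⋯[A_{σ(2n−1)},A_{σ(2n)}], where [A,B] = AB − BA. -/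
/-- The Nambu generalized commutator of operators `A 0, ..., A (n-1)`:
`∑_{σ ∈ S_n} sign(σ) A_{σ(1)} ⋯ A_{σ(n)}`. -/
noncomputable def nambu {R : Type*} [Ring R] {n : ℕ} (A : Fin n → R) : R :=
  ∑ σ : Equiv.Perm (Fin n), (Equiv.Perm.sign σ : ℤ) • (List.ofFn fun i => A (σ i)).prod

/-- The commutator `[A,B] = AB - BA`. -/
def commOp {R : Type*} [Ring R] (A B : R) : R := A * B - B * A

/-!
Cut `Fin (m * n)` into `n` consecutive blocks of size `m`. Every permutation factors uniquely
as `σ * β`, where `σ` is increasing on each block and `β` permutes each block within itself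
(`σ` is recovered by sorting the values of the permutation on each block). Since
`sign β` is the product of the signs of its block components, summing over `β` first turns
every block into the Nambu commutator of that block, which for blocks of size two is `[A, B]`.
-/

open Equiv Finset

theorem List.prod_ofFn_sum {R κ : Type*} [Semiring R] [Fintype κ] :
    ∀ {n : ℕ} (f : Fin n → κ → R),
      (List.ofFn fun i => ∑ k, f i k).prod = ∑ x : Fin n → κ, (List.ofFn fun i => f i (x i)).prod
  | 0, f => by simp
  | n + 1, f => by
    rw [← (Fin.consEquiv fun _ => κ).sum_comp, Fintype.sum_prod_type]
    simp only [List.ofFn_succ, List.prod_cons, Fin.consEquiv_apply, Fin.cons_zero, Fin.cons_succ,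
      List.prod_ofFn_sum fun i => f i.succ, Finset.sum_mul_sum]

theorem List.prod_ofFn_smul {M R : Type*} [CommMonoid M] [Monoid R] [MulAction M R]
    [IsScalarTower M R R] [SMulCommClass M R R] :
    ∀ {n : ℕ} (c : Fin n → M) (x : Fin n → R),
      (List.ofFn fun i => c i • x i).prod = (∏ i, c i) • (List.ofFn x).prod
  | 0, c, x => by simp
  | n + 1, c, x => by
    simp only [List.ofFn_succ, List.prod_cons, Fin.prod_univ_succ,
      List.prod_ofFn_smul fun i => c i.succ, smul_mul_smul_comm]

def finBlockEquiv (m n : ℕ) : Fin n × Fin m ≃ Fin (m * n) :=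
  finProdFinEquiv.trans (finCongr (Nat.mul_comm n m))

@[simp]
theorem finBlockEquiv_apply_val {m n : ℕ} (j : Fin n) (k : Fin m) :
    (finBlockEquiv m n (j, k) : ℕ) = m * j + k := by
  simp [finBlockEquiv, add_comm]

theorem List.prod_ofFn_finBlockEquiv {M : Type*} [Monoid M] {m n : ℕ} (f : Fin (m * n) → M) :
    (List.ofFn f).prod =
      (List.ofFn fun j => (List.ofFn fun k => f (finBlockEquiv m n (j, k))).prod).prod := by
  rw [List.ofFn_mul', List.prod_flatten, List.map_ofFn]
  congr! with j
  simp only [Function.comp_apply]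
  congr! with k
  simp

theorem Tuple.eq_sort_of_strictMono {α : Type*} [LinearOrder α] {m : ℕ} {f : Fin m → α}
    {σ : Perm (Fin m)} (h : StrictMono (f ∘ σ)) : σ = Tuple.sort f :=
  Tuple.eq_sort_iff.2 ⟨h.monotone, fun _ _ hij heq => absurd heq (h hij).ne⟩

namespace Equiv.Perm

variable {m n : ℕ}

def blockPerm : (Fin n → Perm (Fin m)) →* Perm (Fin (m * n)) where
  toFun ρ := (finBlockEquiv m n).permCongr (prodCongrRight ρ)
  map_one' := by ext; simp [prodCongrRight]
  map_mul' ρ ρ' := by ext; simp [prodCongrRight]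

@[simp]
theorem blockPerm_apply (ρ : Fin n → Perm (Fin m)) (j : Fin n) (k : Fin m) :
    blockPerm ρ (finBlockEquiv m n (j, k)) = finBlockEquiv m n (j, ρ j k) := by
  simp [blockPerm]

theorem sign_blockPerm (ρ : Fin n → Perm (Fin m)) : sign (blockPerm ρ) = ∏ j, sign (ρ j) := by
  simp [blockPerm, sign_permCongr, sign_prodCongrRight]

def IsBlockSorted (σ : Perm (Fin (m * n))) : Prop :=
  ∀ j, StrictMono fun k => σ (finBlockEquiv m n (j, k))

instance : DecidablePred (IsBlockSorted (m := m) (n := n)) := fun σ => by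
  unfold IsBlockSorted StrictMono; infer_instance

def sortBlocks (τ : Perm (Fin (m * n))) (j : Fin n) : Perm (Fin m) :=
  Tuple.sort fun k => τ (finBlockEquiv m n (j, k))

theorem isBlockSorted_mul_blockPerm_sortBlocks (τ : Perm (Fin (m * n))) :
    IsBlockSorted (τ * blockPerm (sortBlocks τ)) := fun j => by
  simp only [mul_apply, blockPerm_apply]
  exact (Tuple.monotone_sort _).strictMono_of_injective
    (τ.injective.comp ((finBlockEquiv m n).injective.comp (Prod.mk_right_injective j))
      |>.comp (Tuple.sort _).injective)

theorem sortBlocks_mul_blockPerm {σ : Perm (Fin (m * n))} (hσ : IsBlockSorted σ)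
    (ρ : Fin n → Perm (Fin m)) : sortBlocks (σ * blockPerm ρ) = ρ⁻¹ := by
  funext j
  refine (Tuple.eq_sort_of_strictMono ?_).symm
  simpa [Function.comp_def] using hσ j

theorem sum_isBlockSorted_sum_blockPerm {M : Type*} [AddCommMonoid M]
    (g : Perm (Fin (m * n)) → M) :
    ∑ σ with IsBlockSorted σ, ∑ ρ, g (σ * blockPerm ρ) = ∑ τ, g τ := by
  rw [← Finset.sum_product']
  refine Finset.sum_nbij' (fun p => p.1 * blockPerm p.2)
    (fun τ => (τ * blockPerm (sortBlocks τ), (sortBlocks τ)⁻¹)) (by simp) ?_ ?_ ?_ (by simp)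
  · simp [isBlockSorted_mul_blockPerm_sortBlocks]
  · rintro ⟨σ, ρ⟩ hσ
    simp only [mem_product, mem_filter, mem_univ, true_and, and_true] at hσ
    simp [sortBlocks_mul_blockPerm hσ, mul_assoc]
  · intro τ _
    simp [mul_assoc]

end Equiv.Perm

open Equiv.Perm

section Nambu

variable {R : Type*} [Ring R] {m n : ℕ}

theorem sign_smul_prod_ofFn_nambu_blocks (A : Fin (m * n) → R) (σ : Perm (Fin (m * n))) :
    (sign σ : ℤ) • (List.ofFn fun j => nambu fun k => A (σ (finBlockEquiv m n (j, k)))).prod =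
      ∑ ρ, (sign (σ * blockPerm ρ) : ℤ) • (List.ofFn fun i => A ((σ * blockPerm ρ) i)).prod := by
  simp only [nambu, List.prod_ofFn_sum, List.prod_ofFn_smul, Finset.smul_sum, smul_smul]
  refine sum_congr rfl fun ρ _ => ?_
  rw [List.prod_ofFn_finBlockEquiv (fun i => A ((σ * blockPerm ρ) i)), map_mul, sign_blockPerm]
  simp [mul_apply]

theorem nambu_eq_sum_isBlockSorted (A : Fin (m * n) → R) :
    nambu A = ∑ σ with IsBlockSorted σ,
      (sign σ : ℤ) • (List.ofFn fun j => nambu fun k => A (σ (finBlockEquiv m n (j, k)))).prod := by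
  simp only [sign_smul_prod_ofFn_nambu_blocks]
  exact (sum_isBlockSorted_sum_blockPerm fun τ => (sign τ : ℤ) • (List.ofFn (A ∘ τ)).prod).symm

theorem nambu_fin_two (A : Fin 2 → R) : nambu A = commOp (A 0) (A 1) := by
  rw [nambu, show (univ : Finset (Perm (Fin 2))) = {1, swap 0 1} by decide, sum_pair (by decide)]
  simp [commOp, sub_eq_add_neg]

end Nambu

/-- Lemma `lemcomm1`: the Nambu generalized commutator of
`A₁, ..., A_{2n}`, operators on a finite-dimensional complex vector space, equals the sum
over permutations `σ` with `σ(1)<σ(2), ..., σ(2n-1)<σ(2n)` of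
`sign(σ)·[A_{σ(1)},A_{σ(2)}]⋯[A_{σ(2n-1)},A_{σ(2n)}]`. -/
theorem stmt0 {V : Type*} [AddCommGroup V] [Module ℂ V]
    (n : ℕ) (A : Fin (2 * n) → Module.End ℂ V) :
    nambu A =
      ∑ σ ∈ Finset.univ.filter (fun σ : Equiv.Perm (Fin (2 * n)) =>
          ∀ j : Fin n, σ ⟨2 * j.1, by have := j.2; omega⟩ < σ ⟨2 * j.1 + 1, by have := j.2; omega⟩),
        (Equiv.Perm.sign σ : ℤ) •
          (List.ofFn fun j : Fin n =>
            commOp (A (σ ⟨2 * j.1, by have := j.2; omega⟩))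
                 (A (σ ⟨2 * j.1 + 1, by have := j.2; omega⟩))).prod := by
  have h0 (j : Fin n) : finBlockEquiv 2 n (j, 0) = ⟨2 * j.1, by omega⟩ := Fin.ext (by simp)
  have h1 (j : Fin n) : finBlockEquiv 2 n (j, 1) = ⟨2 * j.1 + 1, by omega⟩ := Fin.ext (by simp)
  rw [nambu_eq_sum_isBlockSorted]
  refine sum_congr (filter_congr fun σ _ => ?_) fun σ _ => ?_
  · simp [IsBlockSorted, Fin.strictMono_iff_lt_succ, h0, h1]
  · simp [nambu_fin_two, h0, h1]
end

section
/- For n = 2 the determinant identity reads: for a 4×4 matrix J over ℂ, with {i,l} = J_{i1}J_{l2} − J_{i2}J_{l1} + J_{i3}J_{l4} − J_{i4}J_{l3}, one has det J = {1,2}{3,4} − {1,3}{2,4} + {1,4}{2,3}. -/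
/-!
The pairing matrix `({i,l})` is `J Ω Jᵀ`, where `Ω` is the Gram matrix of the symplectic form, and
the right-hand side is the Pfaffian of this antisymmetric matrix. The Pfaffian transforms by
`Pf (A M Aᵀ) = det A · Pf M` and `Pf Ω = 1`.
-/

open Matrix

variable {R : Type*} [CommRing R]

def pfaffian4 (M : Matrix (Fin 4) (Fin 4) R) : R :=
  M 0 1 * M 2 3 - M 0 2 * M 1 3 + M 0 3 * M 1 2

theorem pfaffian4_mul_mul_transpose (A M : Matrix (Fin 4) (Fin 4) R)
    (hskew : ∀ i j, M j i = -M i j) (hdiag : ∀ i, M i i = 0) :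
    pfaffian4 (A * M * Aᵀ) = A.det * pfaffian4 M := by
  simp only [pfaffian4, mul_apply, Fin.sum_univ_four, transpose_apply, hdiag,
    hskew 0 1, hskew 0 2, hskew 0 3, hskew 1 2, hskew 1 3, hskew 2 3]
  rw [det_succ_row_zero]
  simp [Fin.sum_univ_succ, det_fin_three, submatrix, Fin.succAbove]
  ring

def symplecticForm4 (R : Type*) [CommRing R] : Matrix (Fin 4) (Fin 4) R :=
  !![0, 1, 0, 0; -1, 0, 0, 0; 0, 0, 0, 1; 0, 0, -1, 0]

theorem symplecticForm4_apply_swap (i j : Fin 4) :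
    symplecticForm4 R j i = -symplecticForm4 R i j := by
  fin_cases i <;> fin_cases j <;> simp [symplecticForm4]

theorem symplecticForm4_apply_self (i : Fin 4) : symplecticForm4 R i i = 0 := by
  fin_cases i <;> simp [symplecticForm4]

theorem pfaffian4_symplecticForm4 : pfaffian4 (symplecticForm4 R) = 1 := by
  simp [pfaffian4, symplecticForm4]

theorem mul_symplecticForm4_mul_transpose_apply (J : Matrix (Fin 4) (Fin 4) R) (i l : Fin 4) :
    (J * symplecticForm4 R * Jᵀ) i l =
      J i 0 * J l 1 - J i 1 * J l 0 + J i 2 * J l 3 - J i 3 * J l 2 := by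
  simp [mul_apply, Fin.sum_univ_four, symplecticForm4]
  ring

/-- for a `4×4` matrix `J` over `ℂ`, with
`{i,l} = J_{i1}J_{l2} − J_{i2}J_{l1} + J_{i3}J_{l4} − J_{i4}J_{l3}`,
one has `det J = {1,2}{3,4} − {1,3}{2,4} + {1,4}{2,3}`. -/
theorem stmt4 (J : Matrix (Fin 4) (Fin 4) ℂ)
    (pb : Fin 4 → Fin 4 → ℂ)
    (hpb : ∀ i l, pb i l = J i 0 * J l 1 - J i 1 * J l 0 + J i 2 * J l 3 - J i 3 * J l 2) :
    J.det = pb 0 1 * pb 2 3 - pb 0 2 * pb 1 3 + pb 0 3 * pb 1 2 := by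
  have hpb_eq : pb = J * symplecticForm4 ℂ * Jᵀ := by
    ext i l
    rw [hpb, mul_symplecticForm4_mul_transpose_apply]
  change J.det = pfaffian4 pb
  rw [hpb_eq, pfaffian4_mul_mul_transpose J _ symplecticForm4_apply_swap
    symplecticForm4_apply_self, pfaffian4_symplecticForm4, mul_one]
end

section
/- Abstract form of Proposition 3 (quantization of the hyperkähler order-4 bracket): suppose f ↦ T_f^{(k)} is a linear map from smooth functions on a compact manifold to operators on finite-dimensional Hilbert spaces satisfying ‖ik[T_f^{(k)},T_g^{(k)}] − T_{{f,g}}^{(k)}‖ = O(1/k), ‖T_f^{(k)}‖ ≤ |f|_∞, and ‖T_f^{(k)}T_g^{(k)} − T_{fg}^{(k)}‖ = O(1/k). Define {f,g,h,t} = {f,g}{h,t} − {f,h}{g,t} + {f,t}{g,h}. Then ‖ −(k²/2)[T_f^{(k)},T_g^{(k)},T_h^{(k)},T_t^{(k)}] − T_{{f,g,h,t}}^{(k)}‖ = O(1/k) as k→∞. -/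
/-!
Expanding the order-4 bracket as a sum of six products of commutators, `−(k²/2)[A,B,C,D]` is half
the sum of the six products `(ik[T_a,T_b])(ik[T_c,T_d])` over the pairings of `f, g, h, t`. Each
factor is `T_{{a,b}}` up to `O(1/k)` and all these operators stay bounded, so each product is
`T_{{a,b}} T_{{c,d}} + O(1/k) = T_{{a,b}{c,d}} + O(1/k)`. As `F` is commutative, the six products
of brackets pair up into twice `{f,g,h,t}`.
-/

open Filter Asymptotics

theorem sum_perm_fin_succ {M : Type*} [AddCommMonoid M] {n : ℕ}
    (φ : Equiv.Perm (Fin (n + 1)) → M) :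
    ∑ σ, φ σ = ∑ p : Fin (n + 1), ∑ e : Equiv.Perm (Fin n),
      φ (Equiv.Perm.decomposeFin.symm (p, e)) := by
  rw [← Fintype.sum_prod_type']
  exact (Equiv.Perm.decomposeFin.symm.sum_comp _).symm

theorem nambu_four {R : Type*} [Ring R] (A B C D : R) :
    nambu ![A, B, C, D] =
      ⁅A, B⁆ * ⁅C, D⁆ - ⁅A, C⁆ * ⁅B, D⁆ + ⁅A, D⁆ * ⁅B, C⁆
        + ⁅C, D⁆ * ⁅A, B⁆ - ⁅B, D⁆ * ⁅A, C⁆ + ⁅B, C⁆ * ⁅A, D⁆ := by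
  simp only [nambu, sum_perm_fin_succ, Fin.sum_univ_succ, Fin.sum_univ_zero, List.ofFn_succ,
    List.ofFn_zero, Equiv.Perm.decomposeFin.symm_sign, Equiv.Perm.decomposeFin_symm_apply_zero,
    Equiv.Perm.decomposeFin_symm_apply_succ, Ring.lie_def]
  simp only [Finset.univ_unique, Equiv.Perm.default_eq, ↓reduceIte, one_mul, Nat.succ_eq_add_one,
    Nat.reduceAdd, Fin.isValue, Matrix.cons_val_zero, Equiv.swap_self, Fin.succ, Nat.zero_mod,
    zero_add, Fin.mk_one, Equiv.refl_apply, Matrix.cons_val_one, Fin.coe_ofNat_eq_mod, Nat.one_mod,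
    Fin.reduceFinMk, Matrix.cons_val, Nat.mod_succ, List.prod_cons, List.prod_nil, mul_one,
    zsmul_eq_mul, Finset.sum_singleton, Equiv.Perm.sign_one, Units.val_one, Int.cast_one, add_zero,
    one_ne_zero, neg_mul, mul_neg, Units.val_neg, Equiv.swap_apply_right, neg_smul,
    Finset.sum_neg_distrib, Equiv.swap_apply_def, Fin.ext_iff, OfNat.ofNat_ne_zero,
    OfNat.ofNat_ne_one, neg_neg, OfNat.one_ne_ofNat, Nat.reduceMod, OfNat.ofNat_eq_ofNat,
    Nat.succ_ne_self, Nat.reduceEqDiff]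
  noncomm_ring

theorem I_mul_smul_mul_I_mul_smul {A : Type*} [Ring A] [Algebra ℂ A] (x : ℂ) (u v : A) :
    ((Complex.I * x) • u) * ((Complex.I * x) • v) = (-x ^ 2) • (u * v) := by
  rw [smul_mul_smul_comm]
  congr 1
  linear_combination x ^ 2 * Complex.I_sq

section NormFamily

-- The spaces `E i` vary with `i`, so estimates are stated for the real functions `i ↦ ‖u i‖`.

variable {ι : Type*} {l : Filter ι} {E : ι → Type*} {r : ι → ℝ}

theorem isBigO_norm_add [∀ i, SeminormedAddCommGroup (E i)] {u v : ∀ i, E i}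
    (hu : (fun i => ‖u i‖) =O[l] r) (hv : (fun i => ‖v i‖) =O[l] r) :
    (fun i => ‖u i + v i‖) =O[l] r :=
  (isBigO_of_le _ fun i => by
    simpa only [norm_norm, Real.norm_of_nonneg (add_nonneg (norm_nonneg _) (norm_nonneg _))]
      using norm_add_le (u i) (v i)).trans (hu.add hv)

theorem isBigO_norm_sub [∀ i, SeminormedAddCommGroup (E i)] {u v : ∀ i, E i}
    (hu : (fun i => ‖u i‖) =O[l] r) (hv : (fun i => ‖v i‖) =O[l] r) :
    (fun i => ‖u i - v i‖) =O[l] r := by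
  simpa only [sub_eq_add_neg, norm_neg] using
    isBigO_norm_add (v := fun i => -v i) hu (by simpa only [norm_neg] using hv)

theorem isBigO_norm_const_smul {𝕜 : Type*} [NormedField 𝕜]
    [∀ i, SeminormedAddCommGroup (E i)] [∀ i, NormedSpace 𝕜 (E i)] (c : 𝕜) {u : ∀ i, E i}
    (hu : (fun i => ‖u i‖) =O[l] r) :
    (fun i => ‖c • u i‖) =O[l] r := by
  simpa only [norm_smul] using hu.const_mul_left ‖c‖

theorem isBigO_norm_of_sub [∀ i, SeminormedAddCommGroup (E i)] {y q : ∀ i, E i}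
    (hy : (fun i => ‖y i - q i‖) =O[l] r) (hr : r =O[l] fun _ => (1 : ℝ))
    (hq : (fun i => ‖q i‖) =O[l] fun _ => (1 : ℝ)) :
    (fun i => ‖y i‖) =O[l] fun _ => (1 : ℝ) := by
  simpa only [sub_add_cancel] using isBigO_norm_add (hy.trans hr) hq

theorem isBigO_norm_mul [∀ i, SeminormedRing (E i)] {u v : ∀ i, E i} {s : ι → ℝ}
    (hu : (fun i => ‖u i‖) =O[l] r) (hv : (fun i => ‖v i‖) =O[l] s) :
    (fun i => ‖u i * v i‖) =O[l] fun i => r i * s i :=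
  (isBigO_of_le _ fun i => by
    simpa only [norm_norm, Real.norm_of_nonneg (mul_nonneg (norm_nonneg _) (norm_nonneg _))]
      using norm_mul_le (u i) (v i)).trans (hu.mul hv)

theorem isBigO_norm_mul_sub_mul [∀ i, SeminormedRing (E i)] {x y p q : ∀ i, E i}
    (hx : (fun i => ‖x i - p i‖) =O[l] r) (hy : (fun i => ‖y i - q i‖) =O[l] r)
    (hr : r =O[l] fun _ => (1 : ℝ)) (hp : (fun i => ‖p i‖) =O[l] fun _ => (1 : ℝ))
    (hq : (fun i => ‖q i‖) =O[l] fun _ => (1 : ℝ)) :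
    (fun i => ‖x i * y i - p i * q i‖) =O[l] r := by
  have hdecomp : ∀ i, x i * y i - p i * q i = (x i - p i) * y i + p i * (y i - q i) := fun i => by
    noncomm_ring
  simp only [hdecomp]
  refine isBigO_norm_add ?_ ?_
  · simpa only [mul_one] using isBigO_norm_mul hx (isBigO_norm_of_sub hy hr hq)
  · simpa only [one_mul] using isBigO_norm_mul hp hy

end NormFamily

/-- Proposition `4functions`, abstract form: for quantization maps `T k`
satisfying `‖ik[T_f,T_g] − T_{{f,g}}‖ = O(1/k)`, `‖T_f‖ ≤ |f|_∞`, and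
`‖T_f T_g − T_{fg}‖ = O(1/k)`, with `{f,g,h,t} = {f,g}{h,t} − {f,h}{g,t} + {f,t}{g,h}`,
one has `‖−(k²/2)[T_f,T_g,T_h,T_t] − T_{{f,g,h,t}}‖ = O(1/k)` as `k → ∞`. -/
theorem stmt13 {F : Type*} [CommRing F] [Algebra ℂ F]
    (H : ℕ → Type*) [∀ k, NormedRing (H k)] [∀ k, NormedAlgebra ℂ (H k)]
    (T : ∀ k, F →ₗ[ℂ] H k)
    (bracket : F → F → F) (supNorm : F → ℝ)
    (h₁ : ∀ f g : F,
      (fun k : ℕ => ‖(Complex.I * k) • (T k f * T k g - T k g * T k f) - T k (bracket f g)‖)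
        =O[atTop] fun k : ℕ => (1 : ℝ) / k)
    (h₂ : ∀ (f : F) (k : ℕ), ‖T k f‖ ≤ supNorm f)
    (h₃ : ∀ f g : F,
      (fun k : ℕ => ‖T k f * T k g - T k (f * g)‖) =O[atTop] fun k : ℕ => (1 : ℝ) / k)
    (f g h t : F) :
    (fun k : ℕ =>
        ‖(-((k : ℂ) ^ 2) / 2) • nambu ![T k f, T k g, T k h, T k t] -
          T k (bracket f g * bracket h t - bracket f h * bracket g t +
            bracket f t * bracket g h)‖)
      =O[atTop] fun k : ℕ => (1 : ℝ) / k := by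
  set X : F → F → ∀ k, H k := fun a b k => (Complex.I * k) • ⁅T k a, T k b⁆ with hX
  set D : F → F → F → F → ∀ k, H k := fun a b c d k =>
    X a b k * X c d k - T k (bracket a b * bracket c d) with hD
  have hr : (fun k : ℕ => (1 : ℝ) / k) =O[atTop] fun _ => (1 : ℝ) :=
    tendsto_one_div_atTop_nhds_zero_nat.isBigO_one ℝ
  have hT : ∀ a, (fun k => ‖T k a‖) =O[atTop] fun _ => (1 : ℝ) := fun a =>
    isBigO_of_le' (c := supNorm a) _ fun k => by simpa using h₂ a k
  have hDO : ∀ a b c d, (fun k => ‖D a b c d k‖) =O[atTop] fun k : ℕ => (1 : ℝ) / k := by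
    intro a b c d
    have := isBigO_norm_add (isBigO_norm_mul_sub_mul (h₁ a b) (h₁ c d) hr (hT _) (hT _))
      (h₃ (bracket a b) (bracket c d))
    simpa only [hD, hX, Ring.lie_def, sub_add_sub_cancel] using this
  have hId : ∀ k : ℕ, (-((k : ℂ) ^ 2) / 2) • nambu ![T k f, T k g, T k h, T k t] -
      T k (bracket f g * bracket h t - bracket f h * bracket g t + bracket f t * bracket g h) =
      (2⁻¹ : ℂ) • (D f g h t k + D h t f g k - D f h g t k - D g t f h k
        + D f t g h k + D g h f t k) := by
    intro k
    simp only [hD, hX, I_mul_smul_mul_I_mul_smul, nambu_four, map_add, map_sub]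
    rw [mul_comm (bracket h t), mul_comm (bracket g t), mul_comm (bracket g h)]
    module
  simp only [hId]
  exact isBigO_norm_const_smul _ <| isBigO_norm_add (isBigO_norm_add (isBigO_norm_sub
    (isBigO_norm_sub (isBigO_norm_add (hDO f g h t) (hDO h t f g)) (hDO f h g t))
    (hDO g t f h)) (hDO f t g h)) (hDO g h f t)
end

section
/- Under the hypotheses of the previous statement (three families of operators with ‖ik[T_{f;r}^{(k)},T_{g;r}^{(k)}] − T_{{f,g}_r;r}^{(k)}‖ = O(1/k), ‖T_{f;r}^{(k)}‖ ≤ |f|_∞, ‖T_{f;r}^{(k)}T_{g;r}^{(k)} − T_{fg;r}^{(k)}‖ = O(1/k)), the commutator of the tensor-product operators 𝕋_f^{(k)} = T_{f;1}^{(k)}⊗T_{f;2}^{(k)}⊗T_{f;3}^{(k)} satisfies ‖[𝕋_f^{(k)},𝕋_g^{(k)}]‖ = O(1/k), and consequently the order-4 generalized commutator satisfies ‖[𝕋_f^{(k)},𝕋_g^{(k)},𝕋_h^{(k)},𝕋_t^{(k)}]‖ = O(1/k²) as k→∞. -/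
open Filter Asymptotics

/-!
Each factor commutator `[T_{f;r}, T_{g;r}]` is `O(1/k)`: multiplied by `ik` it stays within
`O(1/k)` of the bounded operator `T_{{f,g}_r;r}`. Since the tensor map is multiplicative and
additive in each slot, `[𝕋_f, 𝕋_g]` splits into three tensors, each containing one factor
commutator and otherwise only bounded factors, and norms of tensors are products of norms.
Finally, the order-4 Nambu bracket is a signed sum of six products of two ordinary commutators,
hence `O(1/k²)`.
-/

section Nambu

variable {R : Type*}

theorem nambu_fin_four [Ring R] (A : Fin 4 → R) :
    nambu A = ⁅A 0, A 1⁆ * ⁅A 2, A 3⁆ - ⁅A 0, A 2⁆ * ⁅A 1, A 3⁆ + ⁅A 0, A 3⁆ * ⁅A 1, A 2⁆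
      + ⁅A 2, A 3⁆ * ⁅A 0, A 1⁆ - ⁅A 1, A 3⁆ * ⁅A 0, A 2⁆ + ⁅A 1, A 2⁆ * ⁅A 0, A 3⁆ := by
  simp only [nambu, Finset.univ_perm_fin_succ, Finset.sum_map, ← Finset.univ_product_univ,
    Finset.sum_product, Fin.sum_univ_succ, Fin.sum_univ_zero, List.ofFn_succ, List.ofFn_zero,
    Equiv.toEmbedding_apply, Equiv.Perm.decomposeFin.symm_sign,
    Equiv.Perm.decomposeFin_symm_apply_zero, Equiv.Perm.decomposeFin_symm_apply_succ,
    Ring.lie_def]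
  simp only [Finset.univ_unique, Equiv.Perm.default_eq, ↓reduceIte, one_mul, Fin.isValue,
    Nat.reduceAdd, Equiv.swap_self, Fin.succ, Nat.zero_mod, zero_add, Fin.mk_one, Equiv.refl_apply,
    Fin.coe_ofNat_eq_mod, Nat.one_mod, Fin.reduceFinMk, Nat.mod_succ, List.prod_cons, List.prod_nil,
    mul_one, zsmul_eq_mul, Finset.sum_singleton, Equiv.Perm.sign_one, Units.val_one, Int.cast_one,
    add_zero, one_ne_zero, neg_mul, mul_neg, Units.val_neg, Equiv.swap_apply_right, neg_smul,
    Finset.sum_neg_distrib, Equiv.swap_apply_def, Fin.ext_iff, OfNat.ofNat_ne_zero,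
    OfNat.ofNat_ne_one, neg_neg, OfNat.one_ne_ofNat, Nat.reduceMod, OfNat.ofNat_eq_ofNat,
    Nat.succ_ne_self, Nat.reduceEqDiff]
  noncomm_ring

theorem norm_nambu_fin_four_le [NormedRing R] (A : Fin 4 → R) :
    ‖nambu A‖ ≤ ‖⁅A 0, A 1⁆‖ * ‖⁅A 2, A 3⁆‖ + ‖⁅A 0, A 2⁆‖ * ‖⁅A 1, A 3⁆‖
      + ‖⁅A 0, A 3⁆‖ * ‖⁅A 1, A 2⁆‖ + ‖⁅A 2, A 3⁆‖ * ‖⁅A 0, A 1⁆‖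
      + ‖⁅A 1, A 3⁆‖ * ‖⁅A 0, A 2⁆‖ + ‖⁅A 1, A 2⁆‖ * ‖⁅A 0, A 3⁆‖ := by
  rw [nambu_fin_four]
  refine (norm_add_le _ _).trans (add_le_add ?_ (norm_mul_le _ _))
  refine (norm_sub_le _ _).trans (add_le_add ?_ (norm_mul_le _ _))
  refine (norm_add_le _ _).trans (add_le_add ?_ (norm_mul_le _ _))
  refine (norm_add_le _ _).trans (add_le_add ?_ (norm_mul_le _ _))
  exact (norm_sub_le _ _).trans (add_le_add (norm_mul_le _ _) (norm_mul_le _ _))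

theorem isBigO_nambu_fin_four {ι α : Type*} {l : Filter ι} {E : ι → Type*}
    [∀ i, NormedRing (E i)] (A : ∀ i, α → E i) {u : ι → ℝ}
    (hA : ∀ x y, (fun i => ‖⁅A i x, A i y⁆‖) =O[l] u) (a b c d : α) :
    (fun i => ‖nambu ![A i a, A i b, A i c, A i d]‖) =O[l] fun i => u i ^ 2 := by
  have hprod : ∀ x y z w, (fun i => ‖⁅A i x, A i y⁆‖ * ‖⁅A i z, A i w⁆‖) =O[l] fun i => u i ^ 2 :=
    fun x y z w => by simpa only [sq] using (hA x y).mul (hA z w)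
  have hsum := (((((hprod a b c d).add (hprod a c b d)).add (hprod a d b c)).add
    (hprod c d a b)).add (hprod b d a c)).add (hprod b c a d)
  refine (isBigO_of_le' (c := 1) l fun i => ?_).trans hsum
  rw [norm_norm, one_mul, Real.norm_of_nonneg (by positivity)]
  exact norm_nambu_fin_four_le _

end Nambu

section BerezinToeplitz

open Complex

theorem isBigO_one_of_forall_norm_le {ι : Type*} {l : Filter ι} {E : ι → Type*}
    [∀ i, SeminormedAddGroup (E i)] {x : ∀ i, E i} {M : ℝ} (hx : ∀ i, ‖x i‖ ≤ M) :
    (fun i => ‖x i‖) =O[l] fun _ => (1 : ℝ) :=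
  isBigO_of_le' (c := M) l fun i => by simpa using hx i

theorem isBigO_inv_of_isBigO_smul_sub {E : ℕ → Type*} [∀ k, SeminormedAddCommGroup (E k)]
    [∀ k, NormedSpace ℂ (E k)] {x y : ∀ k, E k}
    (hxy : (fun k : ℕ => ‖(I * k) • x k - y k‖) =O[atTop] fun k : ℕ => (1 : ℝ) / k)
    (hy : (fun k => ‖y k‖) =O[atTop] fun _ => (1 : ℝ)) :
    (fun k => ‖x k‖) =O[atTop] fun k : ℕ => (1 : ℝ) / k := by
  have hsmul : (fun k : ℕ => ‖(I * k) • x k‖) =O[atTop] fun _ => (1 : ℝ) := by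
    refine (isBigO_of_le' (c := 1) _ fun k => ?_).trans
      ((hxy.trans (tendsto_one_div_atTop_nhds_zero_nat.isBigO_one ℝ)).add hy)
    rw [norm_norm, one_mul, Real.norm_of_nonneg (by positivity)]
    exact norm_le_norm_sub_add _ _
  have hdiv := (isBigO_refl (fun k : ℕ => (1 : ℝ) / k) atTop).mul hsmul
  simp only [mul_one] at hdiv
  refine hdiv.congr' ?_ EventuallyEq.rfl
  filter_upwards [eventually_ne_atTop 0] with k hk
  rw [norm_smul, norm_mul, norm_I, norm_natCast, one_mul, one_div,
    inv_mul_cancel_left₀ (Nat.cast_ne_zero.mpr hk)]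

theorem isBigO_norm_lie_of_isBigO_smul_lie_sub {F : Type*} {H : ℕ → Type*}
    [∀ k, NormedRing (H k)] [∀ k, NormedAlgebra ℂ (H k)] (T : ∀ k, F → H k)
    (br : F → F → F) (M : F → ℝ)
    (hbr : ∀ f g, (fun k : ℕ => ‖(I * k) • ⁅T k f, T k g⁆ - T k (br f g)‖)
      =O[atTop] fun k : ℕ => (1 : ℝ) / k)
    (hM : ∀ f k, ‖T k f‖ ≤ M f) (f g : F) :
    (fun k => ‖⁅T k f, T k g⁆‖) =O[atTop] fun k : ℕ => (1 : ℝ) / k :=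
  isBigO_inv_of_isBigO_smul_sub (hbr f g) (isBigO_one_of_forall_norm_le (hM (br f g)))

end BerezinToeplitz

/-- The properties of `(X, Y, Z) ↦ X ⊗ Y ⊗ Z` on operator algebras with a cross norm. -/
structure IsTripleTensor {A B C W : Type*} [NormedRing A] [NormedRing B] [NormedRing C]
    [NormedRing W] (τ : A → B → C → W) : Prop where
  norm_apply : ∀ X Y Z, ‖τ X Y Z‖ = ‖X‖ * ‖Y‖ * ‖Z‖
  apply_mul_apply : ∀ X X' Y Y' Z Z', τ X Y Z * τ X' Y' Z' = τ (X * X') (Y * Y') (Z * Z')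
  map_sub₁ : ∀ X X' Y Z, τ (X - X') Y Z = τ X Y Z - τ X' Y Z
  map_sub₂ : ∀ X Y Y' Z, τ X (Y - Y') Z = τ X Y Z - τ X Y' Z
  map_sub₃ : ∀ X Y Z Z', τ X Y (Z - Z') = τ X Y Z - τ X Y Z'

namespace IsTripleTensor

variable {A B C W : Type*} [NormedRing A] [NormedRing B] [NormedRing C] [NormedRing W]
  {τ : A → B → C → W}

theorem lie_apply (hτ : IsTripleTensor τ) (a a' : A) (b b' : B) (c c' : C) :
    ⁅τ a b c, τ a' b' c'⁆ = τ ⁅a, a'⁆ (b * b') (c * c') + τ (a' * a) ⁅b, b'⁆ (c * c')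
      + τ (a' * a) (b' * b) ⁅c, c'⁆ := by
  simp only [Ring.lie_def, hτ.map_sub₁, hτ.map_sub₂, hτ.map_sub₃, hτ.apply_mul_apply]
  abel

theorem norm_lie_le (hτ : IsTripleTensor τ) (a a' : A) (b b' : B) (c c' : C) :
    ‖⁅τ a b c, τ a' b' c'⁆‖ ≤ ‖⁅a, a'⁆‖ * (‖b‖ * ‖b'‖) * (‖c‖ * ‖c'‖)
      + ‖a'‖ * ‖a‖ * ‖⁅b, b'⁆‖ * (‖c‖ * ‖c'‖) + ‖a'‖ * ‖a‖ * (‖b'‖ * ‖b‖) * ‖⁅c, c'⁆‖ := by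
  rw [hτ.lie_apply]
  refine norm_add₃_le.trans ?_
  simp only [hτ.norm_apply]
  gcongr <;> exact norm_mul_le _ _

end IsTripleTensor

theorem isBigO_norm_lie_of_isTripleTensor {ι α : Type*} {l : Filter ι} {A B C W : ι → Type*}
    [∀ i, NormedRing (A i)] [∀ i, NormedRing (B i)] [∀ i, NormedRing (C i)]
    [∀ i, NormedRing (W i)] {τ : ∀ i, A i → B i → C i → W i} (hτ : ∀ i, IsTripleTensor (τ i))
    (T₁ : ∀ i, α → A i) (T₂ : ∀ i, α → B i) (T₃ : ∀ i, α → C i) {u : ι → ℝ}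
    (hlie₁ : ∀ x y, (fun i => ‖⁅T₁ i x, T₁ i y⁆‖) =O[l] u)
    (hlie₂ : ∀ x y, (fun i => ‖⁅T₂ i x, T₂ i y⁆‖) =O[l] u)
    (hlie₃ : ∀ x y, (fun i => ‖⁅T₃ i x, T₃ i y⁆‖) =O[l] u)
    (hbdd₁ : ∀ x, (fun i => ‖T₁ i x‖) =O[l] fun _ => (1 : ℝ))
    (hbdd₂ : ∀ x, (fun i => ‖T₂ i x‖) =O[l] fun _ => (1 : ℝ))
    (hbdd₃ : ∀ x, (fun i => ‖T₃ i x‖) =O[l] fun _ => (1 : ℝ)) (x y : α) :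
    (fun i => ‖⁅τ i (T₁ i x) (T₂ i x) (T₃ i x), τ i (T₁ i y) (T₂ i y) (T₃ i y)⁆‖) =O[l] u := by
  have h₁ := ((hlie₁ x y).mul ((hbdd₂ x).mul (hbdd₂ y))).mul ((hbdd₃ x).mul (hbdd₃ y))
  have h₂ := (((hbdd₁ y).mul (hbdd₁ x)).mul (hlie₂ x y)).mul ((hbdd₃ x).mul (hbdd₃ y))
  have h₃ := (((hbdd₁ y).mul (hbdd₁ x)).mul ((hbdd₂ y).mul (hbdd₂ x))).mul (hlie₃ x y)
  simp only [mul_one, one_mul] at h₁ h₂ h₃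
  refine (isBigO_of_le' (c := 1) l fun i => ?_).trans ((h₁.add h₂).add h₃)
  rw [norm_norm, one_mul, Real.norm_of_nonneg (by positivity)]
  exact (hτ i).norm_lie_le _ _ _ _ _ _

theorem stmt16_general {F : Type*} [CommRing F] [Algebra ℂ F]
    (H₁ H₂ H₃ W : ℕ → Type*)
    [∀ k, NormedRing (H₁ k)] [∀ k, NormedAlgebra ℂ (H₁ k)]
    [∀ k, NormedRing (H₂ k)] [∀ k, NormedAlgebra ℂ (H₂ k)]
    [∀ k, NormedRing (H₃ k)] [∀ k, NormedAlgebra ℂ (H₃ k)]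
    [∀ k, NormedRing (W k)]
    (T₁ : ∀ k, F →ₗ[ℂ] H₁ k) (T₂ : ∀ k, F →ₗ[ℂ] H₂ k) (T₃ : ∀ k, F →ₗ[ℂ] H₃ k)
    (br₁ br₂ br₃ : F → F → F) (supNorm : F → ℝ)
    (h₁₁ : ∀ f g : F,
      (fun k : ℕ => ‖(Complex.I * k) • (T₁ k f * T₁ k g - T₁ k g * T₁ k f) - T₁ k (br₁ f g)‖)
        =O[atTop] fun k : ℕ => (1 : ℝ) / k)
    (h₁₂ : ∀ f g : F,
      (fun k : ℕ => ‖(Complex.I * k) • (T₂ k f * T₂ k g - T₂ k g * T₂ k f) - T₂ k (br₂ f g)‖)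
        =O[atTop] fun k : ℕ => (1 : ℝ) / k)
    (h₁₃ : ∀ f g : F,
      (fun k : ℕ => ‖(Complex.I * k) • (T₃ k f * T₃ k g - T₃ k g * T₃ k f) - T₃ k (br₃ f g)‖)
        =O[atTop] fun k : ℕ => (1 : ℝ) / k)
    (h₂₁ : ∀ (f : F) (k : ℕ), ‖T₁ k f‖ ≤ supNorm f)
    (h₂₂ : ∀ (f : F) (k : ℕ), ‖T₂ k f‖ ≤ supNorm f)
    (h₂₃ : ∀ (f : F) (k : ℕ), ‖T₃ k f‖ ≤ supNorm f)
    (τ : ∀ k, H₁ k → H₂ k → H₃ k → W k)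
    (hnorm : ∀ k X Y Z, ‖τ k X Y Z‖ = ‖X‖ * ‖Y‖ * ‖Z‖)
    (hmul : ∀ k X X' Y Y' Z Z',
      τ k X Y Z * τ k X' Y' Z' = τ k (X * X') (Y * Y') (Z * Z'))
    (hsub₁ : ∀ k X X' Y Z, τ k (X - X') Y Z = τ k X Y Z - τ k X' Y Z)
    (hsub₂ : ∀ k X Y Y' Z, τ k X (Y - Y') Z = τ k X Y Z - τ k X Y' Z)
    (hsub₃ : ∀ k X Y Z Z', τ k X Y (Z - Z') = τ k X Y Z - τ k X Y Z')
    (f g h t : F) :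
    ((fun k : ℕ =>
        ‖τ k (T₁ k f) (T₂ k f) (T₃ k f) * τ k (T₁ k g) (T₂ k g) (T₃ k g) -
          τ k (T₁ k g) (T₂ k g) (T₃ k g) * τ k (T₁ k f) (T₂ k f) (T₃ k f)‖)
      =O[atTop] fun k : ℕ => (1 : ℝ) / k) ∧
    ((fun k : ℕ =>
        ‖nambu ![τ k (T₁ k f) (T₂ k f) (T₃ k f), τ k (T₁ k g) (T₂ k g) (T₃ k g),
            τ k (T₁ k h) (T₂ k h) (T₃ k h), τ k (T₁ k t) (T₂ k t) (T₃ k t)]‖)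
      =O[atTop] fun k : ℕ => (1 : ℝ) / (k : ℝ) ^ 2) := by
  have lie₁ := isBigO_norm_lie_of_isBigO_smul_lie_sub (fun k => T₁ k) br₁ supNorm
    (by simpa only [Ring.lie_def] using h₁₁) h₂₁
  have lie₂ := isBigO_norm_lie_of_isBigO_smul_lie_sub (fun k => T₂ k) br₂ supNorm
    (by simpa only [Ring.lie_def] using h₁₂) h₂₂
  have lie₃ := isBigO_norm_lie_of_isBigO_smul_lie_sub (fun k => T₃ k) br₃ supNorm
    (by simpa only [Ring.lie_def] using h₁₃) h₂₃
  have tensor_lie := isBigO_norm_lie_of_isTripleTensor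
    (fun k => ⟨hnorm k, hmul k, hsub₁ k, hsub₂ k, hsub₃ k⟩) (fun k => T₁ k) (fun k => T₂ k)
    (fun k => T₃ k) lie₁ lie₂ lie₃ (fun f => isBigO_one_of_forall_norm_le (h₂₁ f))
    (fun f => isBigO_one_of_forall_norm_le (h₂₂ f)) (fun f => isBigO_one_of_forall_norm_le (h₂₃ f))
  refine ⟨by simpa only [Ring.lie_def] using tensor_lie f g, ?_⟩
  simpa only [one_div_pow] using isBigO_nambu_fin_four _ tensor_lie f g h t

/-- Corollaries `tensorcorcomm` and `tensorcorcomm2`: under the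
Berezin–Toeplitz hypotheses on the three families `T_{·;r}^{(k)}` and the tensor map `τ`,
the tensor-product operators `𝕋_f = T_{f;1}⊗T_{f;2}⊗T_{f;3}` satisfy
`‖[𝕋_f,𝕋_g]‖ = O(1/k)` and `‖[𝕋_f,𝕋_g,𝕋_h,𝕋_t]‖ = O(1/k²)` as `k → ∞`. -/
theorem stmt16 {F : Type*} [CommRing F] [Algebra ℂ F]
    (H₁ H₂ H₃ W : ℕ → Type*)
    [∀ k, NormedRing (H₁ k)] [∀ k, NormedAlgebra ℂ (H₁ k)]
    [∀ k, NormedRing (H₂ k)] [∀ k, NormedAlgebra ℂ (H₂ k)]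
    [∀ k, NormedRing (H₃ k)] [∀ k, NormedAlgebra ℂ (H₃ k)]
    [∀ k, NormedRing (W k)] [∀ k, NormedAlgebra ℂ (W k)]
    (T₁ : ∀ k, F →ₗ[ℂ] H₁ k) (T₂ : ∀ k, F →ₗ[ℂ] H₂ k) (T₃ : ∀ k, F →ₗ[ℂ] H₃ k)
    (br₁ br₂ br₃ : F → F → F) (supNorm : F → ℝ)
    (h₁₁ : ∀ f g : F,
      (fun k : ℕ => ‖(Complex.I * k) • (T₁ k f * T₁ k g - T₁ k g * T₁ k f) - T₁ k (br₁ f g)‖)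
        =O[atTop] fun k : ℕ => (1 : ℝ) / k)
    (h₁₂ : ∀ f g : F,
      (fun k : ℕ => ‖(Complex.I * k) • (T₂ k f * T₂ k g - T₂ k g * T₂ k f) - T₂ k (br₂ f g)‖)
        =O[atTop] fun k : ℕ => (1 : ℝ) / k)
    (h₁₃ : ∀ f g : F,
      (fun k : ℕ => ‖(Complex.I * k) • (T₃ k f * T₃ k g - T₃ k g * T₃ k f) - T₃ k (br₃ f g)‖)
        =O[atTop] fun k : ℕ => (1 : ℝ) / k)
    (h₂₁ : ∀ (f : F) (k : ℕ), ‖T₁ k f‖ ≤ supNorm f)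
    (h₂₂ : ∀ (f : F) (k : ℕ), ‖T₂ k f‖ ≤ supNorm f)
    (h₂₃ : ∀ (f : F) (k : ℕ), ‖T₃ k f‖ ≤ supNorm f)
    (h₃₁ : ∀ f g : F,
      (fun k : ℕ => ‖T₁ k f * T₁ k g - T₁ k (f * g)‖) =O[atTop] fun k : ℕ => (1 : ℝ) / k)
    (h₃₂ : ∀ f g : F,
      (fun k : ℕ => ‖T₂ k f * T₂ k g - T₂ k (f * g)‖) =O[atTop] fun k : ℕ => (1 : ℝ) / k)
    (h₃₃ : ∀ f g : F,
      (fun k : ℕ => ‖T₃ k f * T₃ k g - T₃ k (f * g)‖) =O[atTop] fun k : ℕ => (1 : ℝ) / k)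
    (τ : ∀ k, H₁ k → H₂ k → H₃ k → W k)
    (hnorm : ∀ k X Y Z, ‖τ k X Y Z‖ = ‖X‖ * ‖Y‖ * ‖Z‖)
    (hmul : ∀ k X X' Y Y' Z Z',
      τ k X Y Z * τ k X' Y' Z' = τ k (X * X') (Y * Y') (Z * Z'))
    (hsub₁ : ∀ k X X' Y Z, τ k (X - X') Y Z = τ k X Y Z - τ k X' Y Z)
    (hsub₂ : ∀ k X Y Y' Z, τ k X (Y - Y') Z = τ k X Y Z - τ k X Y' Z)
    (hsub₃ : ∀ k X Y Z Z', τ k X Y (Z - Z') = τ k X Y Z - τ k X Y Z')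
    (f g h t : F) :
    ((fun k : ℕ =>
        ‖τ k (T₁ k f) (T₂ k f) (T₃ k f) * τ k (T₁ k g) (T₂ k g) (T₃ k g) -
          τ k (T₁ k g) (T₂ k g) (T₃ k g) * τ k (T₁ k f) (T₂ k f) (T₃ k f)‖)
      =O[atTop] fun k : ℕ => (1 : ℝ) / k) ∧
    ((fun k : ℕ =>
        ‖nambu ![τ k (T₁ k f) (T₂ k f) (T₃ k f), τ k (T₁ k g) (T₂ k g) (T₃ k g),
            τ k (T₁ k h) (T₂ k h) (T₃ k h), τ k (T₁ k t) (T₂ k t) (T₃ k t)]‖)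
      =O[atTop] fun k : ℕ => (1 : ℝ) / (k : ℝ) ^ 2) :=
  stmt16_general H₁ H₂ H₃ W T₁ T₂ T₃ br₁ br₂ br₃ supNorm h₁₁ h₁₂ h₁₃ h₂₁ h₂₂ h₂₃ τ hnorm hmul hsub₁
    hsub₂ hsub₃ f g h t
end
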